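/- arXiv:2504.14413 — 2 statements merged into one kernel-verified Lean document; each statement's English description precedes it below -/
import Mathlib

section
/- Define the sequence u : ℕ → ℤ by u n = 4^n + 2, and for each k ∈ ℕ let n_k = (1 + 3^k)/2 (an integer since 3^k is odd). Then for all k ∈ ℕ, 3^(k+1) divides u(n_k). -/
/-! Since `1 + 3^k` is even, `4^((1 + 3^k)/2) + 2 = 2 (2^(3^k) + 1)`. Now
`b³ + 1 = (b + 1)(b² - b + 1)` and `b² - b + 1 = (b + 1)(b - 2) + 3`, so whenever `3 ∣ b + 1`,
passing from `b + 1` to `b³ + 1` gains a factor `3`. Iterating `k` times from `b = 2` gives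
`3^(k+1) ∣ 2^(3^k) + 1`. -/

section CommRing

variable {R : Type*} [CommRing R]

theorem three_dvd_sq_sub_add_one {b : R} (h : 3 ∣ b + 1) : 3 ∣ b ^ 2 - b + 1 := by
  have hb : b ^ 2 - b + 1 = (b + 1) * (b - 2) + 3 := by ring
  rw [hb]
  exact dvd_add (h.mul_right _) dvd_rfl

theorem mul_three_pow_dvd_pow_three_pow_add_one {a : R} (h : 3 ∣ a + 1) (k : ℕ) :
    (a + 1) * 3 ^ k ∣ a ^ 3 ^ k + 1 := by
  induction k with
  | zero => simp
  | succ k ih =>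
    set b := a ^ 3 ^ k
    have hcube : a ^ 3 ^ (k + 1) + 1 = (b + 1) * (b ^ 2 - b + 1) := by
      rw [pow_succ, pow_mul]
      ring
    have hb : 3 ∣ b + 1 := (h.trans (dvd_mul_right _ _)).trans ih
    rw [hcube, pow_succ, ← mul_assoc]
    exact mul_dvd_mul ih (three_dvd_sq_sub_add_one hb)

end CommRing

theorem four_pow_half_add_two (k : ℕ) :
    (4 : ℤ) ^ ((1 + 3 ^ k) / 2) + 2 = 2 * (2 ^ 3 ^ k + 1) := by
  have hodd : Odd (3 ^ k) := Odd.pow ⟨1, rfl⟩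
  have htwice : 2 * ((1 + 3 ^ k) / 2) = 1 + 3 ^ k := by
    obtain ⟨m, hm⟩ := hodd
    omega
  rw [show (4 : ℤ) = 2 ^ 2 by norm_num, ← pow_mul, htwice, pow_add]
  ring

theorem stmt_1 (u : ℕ → ℤ) (hu : ∀ n, u n = 4 ^ n + 2) (k : ℕ) :
    (3 : ℤ) ^ (k + 1) ∣ u ((1 + 3 ^ k) / 2) := by
  have hdvd : (3 : ℤ) * 3 ^ k ∣ 2 ^ 3 ^ k + 1 :=
    mul_three_pow_dvd_pow_three_pow_add_one (a := 2) (by norm_num) k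
  rw [hu, four_pow_half_add_two, pow_succ']
  exact hdvd.mul_left 2
end

section
/- Let u : ℕ → ℤ be a sequence satisfying a linear recurrence of order d with integer coefficients whose characteristic roots λ₁, …, λ_s are units in ℤ_p (p a prime not dividing the last recurrence coefficient), and suppose u_n = Σ_{i=1}^s q_i(n)·λ_i^n for polynomials q_i with coefficients in ℤ_p. If N ≥ 1 satisfies v_p(λ_i^N − 1) > 1/(p−1) for all i, then for each 0 ≤ ℓ ≤ N−1 the function f_ℓ(x) = Σ_{i=1}^s q_i(N·x + ℓ)·λ_i^ℓ·exp(x·log(λ_i^N)) is a well-defined p-adic analytic function on ℤ_p satisfying f_ℓ(n) = u_{N·n+ℓ} for all n ∈ ℕ. -/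
variable (p : ℕ) [Fact p.Prime]

/-- The `p`-adic exponential, defined by its power series (junk value outside the
domain of convergence). -/
noncomputable def padicExp (x : ℚ_[p]) : ℚ_[p] :=
  ∑' n : ℕ, x ^ n / (n.factorial : ℚ_[p])

/-- The `p`-adic logarithm, defined by its power series (junk value outside the
domain of convergence). -/
noncomputable def padicLog (y : ℚ_[p]) : ℚ_[p] :=
  ∑' n : ℕ, (-1) ^ (n + 1) * (y - 1) ^ n / (n : ℚ_[p])

/-!
Everything reduces to `exp (log Y) = Y` on the disc `‖Y - 1‖ < ρ = p ^ (-1/(p-1))`: then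
`exp (n log Y) = exp (log Y) ^ n = Y ^ n`, because on the disc `‖z‖ < ρ` the exponential series
is Mathlib's `NormedSpace.exp`, which is additive inside its radius of convergence. Both series
converge on these discs because `(p - 1) v_p(k!) < k`.

To prove `exp L = Y` for `L = log Y`, compare `p ^ k`-th powers. On the disc `‖u - 1‖ < ρ` the
map `u ↦ u ^ p` divides distances by exactly `p`, so
`‖exp L - Y‖ = p ^ k ‖exp (p ^ k L) - Y ^ (p ^ k)‖`. Writing `Y ^ (p ^ k) = 1 + p ^ k L_k`, the
second-order bound `‖exp z - 1 - z‖ ≤ ‖z‖² / ρ` gives `‖exp L - Y‖ ≤ ‖L‖² / (ρ p ^ k) + ‖L_k - L‖`,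
and `L_k → L` is the limit formula `log Y = lim (Y ^ (p ^ k) - 1) / p ^ k`. It follows from
Tannery's theorem, since `(Y ^ m - 1) / m = ∑ C(m - 1, i) (Y - 1) ^ (i + 1) / (i + 1)` and
`C(p ^ k - 1, i) → C(-1, i) = (-1) ^ i` in `ℤ_[p]`.
-/

open Filter Topology Finset

section Generalities

variable {E : Type*} [NormedAddCommGroup E] {a : ℕ → E} {r δ : ℝ}

theorem summable_of_norm_succ_le_geometric [CompleteSpace E] (hδ₀ : 0 ≤ δ) (hδ₁ : δ < 1)
    (h : ∀ k, ‖a (k + 1)‖ ≤ r * δ ^ k) : Summable a :=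
  (summable_nat_add_iff 1).1 <|
    .of_norm_bounded ((summable_geometric_of_lt_one hδ₀ hδ₁).mul_left r) h

theorem norm_tsum_nat_add_succ_le [IsUltrametricDist E] (hδ₀ : 0 ≤ δ) (hδ₁ : δ ≤ 1)
    (h : ∀ k, ‖a (k + 1)‖ ≤ r * δ ^ k) (j : ℕ) : ‖∑' k, a (k + (j + 1))‖ ≤ r * δ ^ j := by
  have hr : 0 ≤ r := by simpa using (norm_nonneg _).trans (h 0)
  refine IsUltrametricDist.norm_tsum_le_of_forall_le_of_nonneg (by positivity) fun k => ?_
  calc ‖a (k + (j + 1))‖ = ‖a (k + j + 1)‖ := by rw [add_assoc]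
    _ ≤ r * δ ^ (k + j) := h _
    _ ≤ r * δ ^ j := mul_le_mul_of_nonneg_left (pow_le_pow_of_le_one hδ₀ hδ₁ (by omega)) hr

theorem norm_pow_succ_mul_le {K : Type*} [NormedDivisionRing K] {ρ : ℝ} {k : ℕ} {z c : K}
    (hc : ‖c‖ ≤ ρ⁻¹ ^ k) : ‖z ^ (k + 1) * c‖ ≤ ‖z‖ * (‖z‖ / ρ) ^ k := by
  rw [norm_mul, norm_pow, div_pow, div_eq_mul_inv _ (ρ ^ k), ← inv_pow, pow_succ', mul_assoc]
  gcongr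

theorem IsUltrametricDist.norm_eq_one_of_norm_sub_one_lt {R : Type*} [NormedRing R]
    [NormOneClass R] [IsUltrametricDist R] {u : R} (hu : ‖u - 1‖ < 1) : ‖u‖ = 1 := by
  rw [← sub_add_cancel u 1, norm_add_eq_max_of_norm_ne_norm (by rw [norm_one]; exact hu.ne),
    norm_one, max_eq_right hu.le]

theorem one_add_pow_succ_sub_one_div {K : Type*} [Field K] [CharZero K] (t : K) (n : ℕ) :
    ((1 + t) ^ (n + 1) - 1) / (n + 1 : ℕ) =
      ∑ i ∈ range (n + 1), (n.choose i : K) * (t ^ (i + 1) / (i + 1 : ℕ)) := by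
  rw [div_eq_iff (Nat.cast_ne_zero.2 n.succ_ne_zero), sum_mul, add_comm, add_pow, sum_range_succ']
  simp only [one_pow, mul_one, pow_zero, Nat.choose_zero_right, Nat.cast_one, add_sub_cancel_right]
  refine sum_congr rfl fun i _ => ?_
  have h := congrArg (Nat.cast : ℕ → K) (Nat.add_one_mul_choose_eq n i)
  push_cast at h ⊢
  field_simp
  linear_combination -t ^ (i + 1) * h

theorem one_add_pow_add_two {R : Type*} [CommRing R] (t : R) (n : ℕ) :
    (1 + t) ^ (n + 2) = 1 + ((n + 2 : ℕ) : R) * t +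
      ∑ i ∈ range (n + 1), ((n + 2).choose (i + 2) : R) * t ^ (i + 2) := by
  rw [add_comm 1 t, add_pow, sum_range_succ', sum_range_succ']
  simp only [one_pow, mul_one, pow_zero, zero_add, pow_one, Nat.choose_zero_right,
    Nat.choose_one_right, Nat.cast_one]
  ring_nf

end Generalities

/-- `‖x‖ < padicExpRadius p` says `v_p(x) > 1/(p-1)`. -/
noncomputable def padicExpRadius (p : ℕ) : ℝ := (p : ℝ) ^ (-(1 : ℝ) / ((p : ℝ) - 1))

section PadicExpLog

variable {p}

local notation "ρ" => padicExpRadius p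

theorem padicExpRadius_pos : 0 < ρ :=
  Real.rpow_pos_of_pos (by exact_mod_cast (Fact.out : p.Prime).pos) _

theorem padicExpRadius_pow_sub_one : ρ ^ (p - 1) = (p : ℝ)⁻¹ := by
  have hp : (1 : ℝ) < p := by exact_mod_cast (Fact.out : p.Prime).one_lt
  rw [padicExpRadius, ← Real.rpow_natCast, ← Real.rpow_mul (by positivity),
    Nat.cast_sub (Fact.out : p.Prime).one_le, Nat.cast_one,
    div_mul_cancel₀ _ (by linarith), Real.rpow_neg_one]

theorem padicExpRadius_le_one : ρ ≤ 1 := by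
  have hp := (Fact.out : p.Prime).two_le
  rw [← pow_le_one_iff_of_nonneg padicExpRadius_pos.le (by omega : p - 1 ≠ 0),
    padicExpRadius_pow_sub_one]
  exact inv_le_one_of_one_le₀ (by exact_mod_cast (Fact.out : p.Prime).one_le)

theorem norm_div_padicExpRadius_nonneg (z : ℚ_[p]) : 0 ≤ ‖z‖ / ρ :=
  div_nonneg (norm_nonneg _) padicExpRadius_pos.le

theorem norm_div_padicExpRadius_lt_one {z : ℚ_[p]} (hz : ‖z‖ < ρ) : ‖z‖ / ρ < 1 :=
  (div_lt_one padicExpRadius_pos).2 hz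

theorem norm_inv_factorial_succ_le (k : ℕ) :
    ‖(((k + 1).factorial : ℕ) : ℚ_[p])⁻¹‖ ≤ ρ⁻¹ ^ k := by
  have hv : (p - 1) * padicValNat p (k + 1).factorial < k + 1 :=
    sub_one_mul_padicValNat_factorial_lt_of_ne_zero p k.succ_ne_zero
  have hρ : ρ⁻¹ ^ (p - 1) = p := by rw [inv_pow, padicExpRadius_pow_sub_one, inv_inv]
  rw [norm_inv, Padic.norm_eq_zpow_neg_valuation (Nat.cast_ne_zero.2 (Nat.factorial_ne_zero _)),
    Padic.valuation_natCast, zpow_neg, inv_inv, zpow_natCast, ← hρ, ← pow_mul]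
  exact pow_le_pow_right₀ (one_le_inv₀ padicExpRadius_pos |>.2 padicExpRadius_le_one)
    (by omega)

theorem norm_inv_natCast_succ_le (k : ℕ) : ‖((k + 1 : ℕ) : ℚ_[p])⁻¹‖ ≤ ρ⁻¹ ^ k := by
  refine le_trans ?_ (norm_inv_factorial_succ_le k)
  rw [norm_inv, norm_inv]
  refine inv_anti₀ (norm_pos_iff.2 (Nat.cast_ne_zero.2 (Nat.factorial_ne_zero _))) ?_
  rw [Nat.factorial_succ, Nat.cast_mul, norm_mul]
  exact mul_le_of_le_one_right (norm_nonneg _) (IsUltrametricDist.norm_natCast_le_one _ _)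

theorem norm_pow_succ_div_factorial_le (z : ℚ_[p]) (k : ℕ) :
    ‖z ^ (k + 1) / ((k + 1).factorial : ℚ_[p])‖ ≤ ‖z‖ * (‖z‖ / ρ) ^ k := by
  rw [div_eq_mul_inv]
  exact norm_pow_succ_mul_le (norm_inv_factorial_succ_le k)

theorem norm_pow_succ_div_succ_le (t : ℚ_[p]) (k : ℕ) :
    ‖t ^ (k + 1) / ((k + 1 : ℕ) : ℚ_[p])‖ ≤ ‖t‖ * (‖t‖ / ρ) ^ k := by
  rw [div_eq_mul_inv]
  exact norm_pow_succ_mul_le (norm_inv_natCast_succ_le k)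

theorem summable_padicExp {z : ℚ_[p]} (hz : ‖z‖ < ρ) :
    Summable fun k : ℕ => z ^ k / (k.factorial : ℚ_[p]) :=
  summable_of_norm_succ_le_geometric (norm_div_padicExpRadius_nonneg z)
    (norm_div_padicExpRadius_lt_one hz) (norm_pow_succ_div_factorial_le z)

theorem norm_padicExp_sub_one_le {z : ℚ_[p]} (hz : ‖z‖ < ρ) : ‖padicExp p z - 1‖ ≤ ‖z‖ := by
  have h := norm_tsum_nat_add_succ_le (a := fun k : ℕ => z ^ k / (k.factorial : ℚ_[p]))
    (norm_div_padicExpRadius_nonneg z) (norm_div_padicExpRadius_lt_one hz).le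
    (norm_pow_succ_div_factorial_le z) 0
  rw [padicExp, (summable_padicExp hz).tsum_eq_zero_add]
  simpa using h

theorem norm_padicExp_sub_one_sub_le {z : ℚ_[p]} (hz : ‖z‖ < ρ) :
    ‖padicExp p z - 1 - z‖ ≤ ‖z‖ ^ 2 / ρ := by
  have h := norm_tsum_nat_add_succ_le (a := fun k : ℕ => z ^ k / (k.factorial : ℚ_[p]))
    (norm_div_padicExpRadius_nonneg z) (norm_div_padicExpRadius_lt_one hz).le
    (norm_pow_succ_div_factorial_le z) 1
  rw [padicExp, ← (summable_padicExp hz).sum_add_tsum_nat_add 2]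
  convert h using 1
  · rw [show ∑ i ∈ range 2, z ^ i / (i.factorial : ℚ_[p]) = 1 + z by simp [sum_range_succ],
      sub_sub, add_sub_cancel_left]
  · ring

theorem padicExpRadius_le_radius_expSeries :
    ENNReal.ofReal ρ ≤ (NormedSpace.expSeries ℚ_[p] ℚ_[p]).radius := by
  rw [NormedSpace.expSeries_eq_ofScalars]
  refine FormalMultilinearSeries.le_radius_of_bound _ 1 fun n => ?_
  rw [FormalMultilinearSeries.ofScalars_norm, Real.coe_toNNReal _ padicExpRadius_pos.le]
  cases n with
  | zero => simp
  | succ k =>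
    calc ‖(((k + 1).factorial : ℕ) : ℚ_[p])⁻¹‖ * ρ ^ (k + 1) ≤ ρ⁻¹ ^ k * ρ ^ (k + 1) :=
          mul_le_mul_of_nonneg_right (norm_inv_factorial_succ_le k)
            (pow_nonneg padicExpRadius_pos.le _)
      _ = ρ := by rw [pow_succ, ← mul_assoc, ← mul_pow, inv_mul_cancel₀ padicExpRadius_pos.ne',
          one_pow, one_mul]
      _ ≤ 1 := padicExpRadius_le_one

theorem mem_eball_radius_expSeries {z : ℚ_[p]} (hz : ‖z‖ < ρ) :
    z ∈ Metric.eball 0 (NormedSpace.expSeries ℚ_[p] ℚ_[p]).radius := by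
  rw [Metric.mem_eball, edist_zero_right, ← ofReal_norm]
  exact lt_of_lt_of_le ((ENNReal.ofReal_lt_ofReal_iff padicExpRadius_pos).2 hz)
    padicExpRadius_le_radius_expSeries

theorem padicExp_eq_exp (z : ℚ_[p]) : padicExp p z = NormedSpace.exp z := by
  rw [NormedSpace.exp_eq_tsum_div, padicExp]

theorem padicExp_add {x z : ℚ_[p]} (hx : ‖x‖ < ρ) (hz : ‖z‖ < ρ) :
    padicExp p (x + z) = padicExp p x * padicExp p z := by
  simp only [padicExp_eq_exp]
  exact NormedSpace.exp_add_of_mem_ball (mem_eball_radius_expSeries hx)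
    (mem_eball_radius_expSeries hz)

theorem padicExp_natCast_mul {z : ℚ_[p]} (hz : ‖z‖ < ρ) (n : ℕ) :
    padicExp p (n * z) = padicExp p z ^ n := by
  induction n with
  | zero => rw [Nat.cast_zero, zero_mul, pow_zero, padicExp_eq_exp, NormedSpace.exp_zero]
  | succ n ih =>
    have hnz : ‖(n : ℚ_[p]) * z‖ < ρ := by
      rw [norm_mul]
      exact (mul_le_of_le_one_left (norm_nonneg _)
        (IsUltrametricDist.norm_natCast_le_one _ _)).trans_lt hz
    rw [Nat.cast_succ, add_one_mul, padicExp_add hnz hz, ih, pow_succ]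

theorem norm_padicLog_term_succ_le (t : ℚ_[p]) (k : ℕ) :
    ‖(-1) ^ (k + 1 + 1) * t ^ (k + 1) / ((k + 1 : ℕ) : ℚ_[p])‖ ≤ ‖t‖ * (‖t‖ / ρ) ^ k := by
  rw [mul_div_assoc, norm_mul, norm_pow, norm_neg, norm_one, one_pow, one_mul]
  exact norm_pow_succ_div_succ_le t k

theorem summable_padicLog {y : ℚ_[p]} (hy : ‖y - 1‖ < ρ) :
    Summable fun n : ℕ => (-1) ^ (n + 1) * (y - 1) ^ n / (n : ℚ_[p]) :=
  summable_of_norm_succ_le_geometric (norm_div_padicExpRadius_nonneg _)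
    (norm_div_padicExpRadius_lt_one hy) (norm_padicLog_term_succ_le (y - 1))

theorem padicLog_eq_tsum {y : ℚ_[p]} (hy : ‖y - 1‖ < ρ) :
    padicLog p y = ∑' i : ℕ, (-1) ^ i * ((y - 1) ^ (i + 1) / ((i + 1 : ℕ) : ℚ_[p])) := by
  rw [padicLog, (summable_padicLog hy).tsum_eq_zero_add, Nat.cast_zero, div_zero, zero_add]
  exact tsum_congr fun i => by ring

theorem norm_padicLog_le {y : ℚ_[p]} (hy : ‖y - 1‖ < ρ) : ‖padicLog p y‖ ≤ ‖y - 1‖ := by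
  have h := norm_tsum_nat_add_succ_le
    (a := fun n : ℕ => (-1) ^ (n + 1) * (y - 1) ^ n / (n : ℚ_[p]))
    (norm_div_padicExpRadius_nonneg _) (norm_div_padicExpRadius_lt_one hy).le
    (norm_padicLog_term_succ_le (y - 1)) 0
  rw [padicLog, (summable_padicLog hy).tsum_eq_zero_add, Nat.cast_zero, div_zero, zero_add]
  simpa using h

theorem tendsto_choose_prime_pow_sub_one (i : ℕ) :
    Tendsto (fun k : ℕ => (((p ^ k - 1).choose i : ℕ) : ℚ_[p])) atTop (𝓝 ((-1) ^ i)) := by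
  have hcast (k : ℕ) : (((p ^ k - 1).choose i : ℕ) : ℚ_[p]) =
      ((Ring.choose ((p : ℤ_[p]) ^ k - 1) i : ℤ_[p]) : ℚ_[p]) := by
    rw [← Nat.cast_pow, ← Nat.cast_pred (pow_pos (Fact.out : p.Prime).pos k), Ring.choose_natCast]
    simp
  have hlim : Ring.choose (-1 : ℤ_[p]) i = (-1) ^ i := by
    rw [Ring.choose_neg, add_sub_cancel_left, Ring.choose_natCast, Nat.choose_self, Nat.cast_one]
    simp [Units.smul_def, Int.negOnePow_def]
  have hp : Tendsto (fun k : ℕ => (p : ℤ_[p]) ^ k - 1) atTop (𝓝 (-1)) := by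
    have hp₁ : ‖(p : ℤ_[p])‖ < 1 := PadicInt.norm_p.trans_lt
      (inv_lt_one_of_one_lt₀ (by exact_mod_cast (Fact.out : p.Prime).one_lt))
    simpa using (tendsto_pow_atTop_nhds_zero_of_norm_lt_one hp₁).sub_const 1
  have hchoose := ((PadicInt.continuous_choose i).tendsto (-1)).comp hp
  rw [hlim] at hchoose
  have hcoe : Continuous (fun x : ℤ_[p] => (x : ℚ_[p])) := continuous_subtype_val
  simp_rw [hcast]
  simpa [Function.comp_def] using (hcoe.tendsto _).comp hchoose

theorem tendsto_pow_prime_pow_sub_one_div {y : ℚ_[p]} (hy : ‖y - 1‖ < ρ) :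
    Tendsto (fun k : ℕ => (y ^ p ^ k - 1) / (p : ℚ_[p]) ^ k) atTop (𝓝 (padicLog p y)) := by
  have hrepr (k : ℕ) : (y ^ p ^ k - 1) / (p : ℚ_[p]) ^ k = ∑' i : ℕ,
      (((p ^ k - 1).choose i : ℕ) : ℚ_[p]) * ((y - 1) ^ (i + 1) / ((i + 1 : ℕ) : ℚ_[p])) := by
    have hk : p ^ k - 1 + 1 = p ^ k :=
      Nat.sub_add_cancel (Nat.one_le_pow _ _ (Fact.out : p.Prime).pos)
    have h := one_add_pow_succ_sub_one_div (y - 1) (p ^ k - 1)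
    rw [hk, add_sub_cancel, Nat.cast_pow] at h
    rw [h, tsum_eq_sum fun i hi => ?_]
    rw [mem_range, not_lt] at hi
    rw [Nat.choose_eq_zero_of_lt (by omega), Nat.cast_zero, zero_mul]
  simp_rw [hrepr, padicLog_eq_tsum hy]
  refine tendsto_tsum_of_dominated_convergence
    ((summable_geometric_of_lt_one (norm_div_padicExpRadius_nonneg _)
      (norm_div_padicExpRadius_lt_one hy)).mul_left ‖y - 1‖)
    (fun i => (tendsto_choose_prime_pow_sub_one i).mul_const _) (.of_forall fun k i => ?_)
  rw [norm_mul]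
  exact (mul_le_of_le_one_left (norm_nonneg _) (IsUltrametricDist.norm_natCast_le_one _ _)).trans
    (norm_pow_succ_div_succ_le _ i)

theorem norm_natCast_le_inv_of_dvd {n : ℕ} (h : p ∣ n) : ‖(n : ℚ_[p])‖ ≤ (p : ℝ)⁻¹ := by
  obtain ⟨c, rfl⟩ := h
  rw [Nat.cast_mul, norm_mul, Padic.norm_p]
  exact mul_le_of_le_one_right (by positivity) (IsUltrametricDist.norm_natCast_le_one _ _)

theorem norm_choose_prime_mul_pow_lt {t : ℚ_[p]} (ht₀ : t ≠ 0) (ht : ‖t‖ < ρ) {j : ℕ}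
    (hj₂ : 2 ≤ j) (hjp : j ≤ p) : ‖(p.choose j : ℚ_[p]) * t ^ j‖ < ‖t‖ / p := by
  have ht₀' : 0 < ‖t‖ := norm_pos_iff.2 ht₀
  have ht₁ : ‖t‖ < 1 := ht.trans_le padicExpRadius_le_one
  rw [norm_mul, norm_pow, div_eq_inv_mul]
  rcases hjp.lt_or_eq with hjp | hjp
  · have hc := norm_natCast_le_inv_of_dvd ((Fact.out : p.Prime).dvd_choose_self (by omega) hjp)
    calc ‖(p.choose j : ℚ_[p])‖ * ‖t‖ ^ j ≤ (p : ℝ)⁻¹ * ‖t‖ ^ j :=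
          mul_le_mul_of_nonneg_right hc (by positivity)
      _ < (p : ℝ)⁻¹ * ‖t‖ :=
          mul_lt_mul_of_pos_left (pow_lt_self_of_lt_one₀ ht₀' ht₁ (by omega))
            (inv_pos.2 (by exact_mod_cast (Fact.out : p.Prime).pos))
  · have hp := (Fact.out : p.Prime).one_lt
    rw [hjp, Nat.choose_self, Nat.cast_one, norm_one, one_mul, ← padicExpRadius_pow_sub_one,
      ← pow_sub_one_mul (by omega : p ≠ 0)]
    exact mul_lt_mul_of_pos_right (pow_lt_pow_left₀ ht (norm_nonneg _) (by omega)) ht₀'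

theorem norm_pow_prime_sub_one {u : ℚ_[p]} (hu : ‖u - 1‖ < ρ) : ‖u ^ p - 1‖ = ‖u - 1‖ / p := by
  have hp := (Fact.out : p.Prime).two_le
  rcases eq_or_ne (u - 1) 0 with h0 | h0
  · rw [sub_eq_zero.1 h0]
    simp
  have hexp : u ^ p - 1 = p * (u - 1) +
      ∑ i ∈ range (p - 1), (p.choose (i + 2) : ℚ_[p]) * (u - 1) ^ (i + 2) := by
    have h := one_add_pow_add_two (u - 1) (p - 2)
    rw [Nat.sub_add_cancel hp, show p - 2 + 1 = p - 1 by omega, add_sub_cancel] at h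
    rw [h]
    ring
  have hlin : ‖(p : ℚ_[p]) * (u - 1)‖ = ‖u - 1‖ / p := by
    rw [norm_mul, Padic.norm_p, inv_mul_eq_div]
  have hrest : ‖∑ i ∈ range (p - 1), (p.choose (i + 2) : ℚ_[p]) * (u - 1) ^ (i + 2)‖ <
      ‖u - 1‖ / p := by
    obtain ⟨i, hi, hle⟩ := IsUltrametricDist.exists_norm_finsetSum_le_of_nonempty
      (nonempty_range_iff.2 (by omega : p - 1 ≠ 0))
      fun i => (p.choose (i + 2) : ℚ_[p]) * (u - 1) ^ (i + 2)
    rw [mem_range] at hi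
    exact hle.trans_lt (norm_choose_prime_mul_pow_lt h0 hu (by omega) (by omega))
  rw [hexp, IsUltrametricDist.norm_add_eq_max_of_norm_ne_norm (hlin ▸ hrest.ne'), hlin,
    max_eq_left hrest.le]

theorem norm_pow_prime_sub_pow {a b : ℚ_[p]} (ha : ‖a - 1‖ < ρ) (hb : ‖b - 1‖ < ρ) :
    ‖a ^ p - b ^ p‖ = ‖a - b‖ / p := by
  have hb₁ : ‖b‖ = 1 :=
    IsUltrametricDist.norm_eq_one_of_norm_sub_one_lt (hb.trans_le padicExpRadius_le_one)
  have hb₀ : b ≠ 0 := norm_ne_zero_iff.1 (by rw [hb₁]; exact one_ne_zero)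
  have hab : ‖a / b - 1‖ = ‖a - b‖ := by rw [div_sub_one hb₀, norm_div, hb₁, div_one]
  have hab' : ‖a - b‖ < ρ :=
    calc ‖a - b‖ = dist a b := (dist_eq_norm a b).symm
      _ ≤ max (dist a 1) (dist 1 b) := IsUltrametricDist.dist_triangle_max a 1 b
      _ < ρ := by rw [dist_eq_norm, dist_eq_norm, norm_sub_rev 1 b]; exact max_lt ha hb
  have hfactor : a ^ p - b ^ p = b ^ p * ((a / b) ^ p - 1) := by
    rw [div_pow, mul_sub, mul_div_cancel₀ _ (pow_ne_zero _ hb₀), mul_one]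
  rw [hfactor, norm_mul, norm_pow, hb₁, one_pow, one_mul, norm_pow_prime_sub_one (hab ▸ hab'), hab]

theorem norm_pow_prime_pow_sub_pow (k : ℕ) {a b : ℚ_[p]} (ha : ‖a - 1‖ < ρ) (hb : ‖b - 1‖ < ρ) :
    ‖a ^ p ^ k - b ^ p ^ k‖ = ‖a - b‖ / p ^ k := by
  induction k generalizing a b with
  | zero => simp
  | succ k ih =>
    have hpow {c : ℚ_[p]} (hc : ‖c - 1‖ < ρ) : ‖c ^ p - 1‖ < ρ := by
      rw [norm_pow_prime_sub_one hc]
      exact (div_le_self (norm_nonneg _)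
        (by exact_mod_cast (Fact.out : p.Prime).one_le)).trans_lt hc
    rw [pow_succ', pow_mul, pow_mul, ih (hpow ha) (hpow hb), norm_pow_prime_sub_pow ha hb,
      div_div, pow_succ']

theorem norm_padicExp_sub_le {L y : ℚ_[p]} (hL : ‖L‖ < ρ) (hy : ‖y - 1‖ < ρ) (k : ℕ) :
    ‖padicExp p L - y‖ ≤ ‖L‖ ^ 2 / ρ / (p : ℝ) ^ k + ‖(y ^ p ^ k - 1) / (p : ℚ_[p]) ^ k - L‖ := by
  have hp : (0 : ℝ) < p := by exact_mod_cast (Fact.out : p.Prime).pos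
  set m : ℚ_[p] := (p : ℚ_[p]) ^ k
  have hm : ‖m‖ = ((p : ℝ) ^ k)⁻¹ := by rw [norm_pow, Padic.norm_p, inv_pow]
  have hm₀ : m ≠ 0 := pow_ne_zero _ (by exact_mod_cast (Fact.out : p.Prime).ne_zero)
  have hmL : ‖m * L‖ < ρ := by
    rw [norm_mul, hm]
    exact (mul_le_of_le_one_left (norm_nonneg _) (inv_le_one_of_one_le₀
      (one_le_pow₀ (by exact_mod_cast (Fact.out : p.Prime).one_le)))).trans_lt hL
  have hpow : padicExp p (m * L) = padicExp p L ^ p ^ k := by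
    rw [← padicExp_natCast_mul hL, Nat.cast_pow]
  have hsplit : padicExp p (m * L) - y ^ p ^ k =
      (padicExp p (m * L) - 1 - m * L) - m * ((y ^ p ^ k - 1) / m - L) := by
    field_simp
    ring
  have hexpL : ‖padicExp p L - 1‖ < ρ := (norm_padicExp_sub_one_le hL).trans_lt hL
  calc ‖padicExp p L - y‖ = (p : ℝ) ^ k * ‖padicExp p L ^ p ^ k - y ^ p ^ k‖ := by
        rw [norm_pow_prime_pow_sub_pow k hexpL hy, mul_div_cancel₀ _ (by positivity)]
    _ ≤ (p : ℝ) ^ k * (‖m * L‖ ^ 2 / ρ + ‖m‖ * ‖(y ^ p ^ k - 1) / m - L‖) := by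
        rw [← hpow, hsplit, ← norm_mul]
        gcongr
        exact (norm_sub_le _ _).trans (add_le_add_left (norm_padicExp_sub_one_sub_le hmL) _)
    _ = ‖L‖ ^ 2 / ρ / (p : ℝ) ^ k + ‖(y ^ p ^ k - 1) / m - L‖ := by
        rw [norm_mul, hm]
        field_simp

theorem padicExp_padicLog {y : ℚ_[p]} (hy : ‖y - 1‖ < ρ) : padicExp p (padicLog p y) = y := by
  have hL : ‖padicLog p y‖ < ρ := (norm_padicLog_le hy).trans_lt hy
  have hdecay : Tendsto (fun k : ℕ => ‖padicLog p y‖ ^ 2 / ρ / (p : ℝ) ^ k) atTop (𝓝 0) :=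
    tendsto_const_nhds.div_atTop
      (tendsto_pow_atTop_atTop_of_one_lt (by exact_mod_cast (Fact.out : p.Prime).one_lt))
  have hlim := hdecay.add
    (tendsto_iff_norm_sub_tendsto_zero.1 (tendsto_pow_prime_pow_sub_one_div hy))
  rw [add_zero] at hlim
  exact sub_eq_zero.1 (norm_le_zero_iff.1 (ge_of_tendsto' hlim (norm_padicExp_sub_le hL hy)))

theorem padicExp_natCast_mul_padicLog {y : ℚ_[p]} (hy : ‖y - 1‖ < ρ) (n : ℕ) :
    padicExp p (n * padicLog p y) = y ^ n := by
  rw [padicExp_natCast_mul ((norm_padicLog_le hy).trans_lt hy), padicExp_padicLog hy]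

end PadicExpLog

theorem stmt_18 (s : ℕ) (lam : Fin s → ℤ_[p])
    (q : Fin s → Polynomial ℤ_[p]) (u : ℕ → ℤ)
    (hu : ∀ n : ℕ, (u n : ℚ_[p]) =
      ∑ i : Fin s, Polynomial.aeval (n : ℚ_[p]) (q i) * ((lam i : ℚ_[p])) ^ n)
    (N : ℕ)
    (hval : ∀ i, ‖(lam i : ℚ_[p]) ^ N - 1‖ < (p : ℝ) ^ (-(1 : ℝ) / ((p : ℝ) - 1))) :
    ∀ ℓ : ℕ, ℓ < N →
      (∀ i : Fin s, ∀ x : ℤ_[p],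
        Summable fun k : ℕ =>
          ((x : ℚ_[p]) * padicLog p ((lam i : ℚ_[p]) ^ N)) ^ k / (k.factorial : ℚ_[p])) ∧
      (∀ n : ℕ,
        ∑ i : Fin s, Polynomial.aeval ((N * n + ℓ : ℕ) : ℚ_[p]) (q i)
            * ((lam i : ℚ_[p])) ^ ℓ
            * padicExp p ((n : ℚ_[p]) * padicLog p ((lam i : ℚ_[p]) ^ N))
          = (u (N * n + ℓ) : ℚ_[p])) := by
  intro ℓ _
  refine ⟨fun i x => summable_padicExp ?_, fun n => ?_⟩
  · rw [norm_mul]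
    exact (mul_le_of_le_one_left (norm_nonneg _) (PadicInt.norm_le_one x)).trans_lt
      ((norm_padicLog_le (hval i)).trans_lt (hval i))
  · rw [hu]
    refine sum_congr rfl fun i _ => ?_
    rw [padicExp_natCast_mul_padicLog (hval i), mul_assoc, ← pow_mul, ← pow_add, add_comm ℓ]
end
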